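/- Let V be the ℚ-vector space with basis A₁, A₂, A₃, B₁, B₂, B₃, C₁, C₂, C₃, E₁, E₂, E₃, equipped with the symmetric bilinear form B determined by: A₁,...,C₃ form a 9-cycle in the listed cyclic order with each self-pairing −2 and consecutive pairings 1; E₁, E₂, E₃ have self-pairing −3 and pairwise pairing 0; E₁·A₂ = E₂·B₂ = E₃·C₂ = 1; E₁·(A₃,B₃,C₃) = (2,1,2), E₂·(A₃,B₃,C₃) = (2,2,1), E₃·(A₃,B₃,C₃) = (1,2,2); and all other pairings among basis vectors are 0. For integers a, b, set v = (1/7)(A₁ + 2A₂ + 3E₁) + (a/7)(B₁ + 2B₂ + 3E₂) + (b/7)(C₁ + 2C₂ + 3E₃) ∈ V. Then B(v, x) ∈ ℤ for all twelve basis vectors x if and only if a ≡ 4 (mod 7) and b ≡ 2 (mod 7). -/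

import Mathlib

/-! Pairing `v` with a basis vector reads off a column of the Gram matrix. Only the pairings with
`A₃`, `B₃`, `C₃` can fail to be integral: they are `(8 + 3b)/7`, `(3 + 8a)/7` and
`(7 + 3a + 8b)/7` modulo `ℤ`. Integrality at `A₃` and `B₃` forces `b ≡ 2` and `a ≡ 4 (mod 7)`,
and then `3a + 8b ≡ 28 ≡ 0`, so integrality at `C₃` comes for free. -/

/-- The Gram matrix of the twelve curves `A₁, A₂, A₃, B₁, B₂, B₃, C₁, C₂, C₃,
E₁, E₂, E₃` (in this order) on the surface `X` in Case I: the first nine form a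
9-cycle of `(-2)`-curves, `E₁, E₂, E₃` are disjoint `(-3)`-curves with
`E₁·A₂ = E₂·B₂ = E₃·C₂ = 1`, `E₁·(A₃,B₃,C₃) = (2,1,2)`,
`E₂·(A₃,B₃,C₃) = (2,2,1)`, `E₃·(A₃,B₃,C₃) = (1,2,2)`,
and all other intersections zero. -/
def gram12 : Matrix (Fin 12) (Fin 12) ℚ :=
  !![-2, 1, 0, 0, 0, 0, 0, 0, 1, 0, 0, 0;
     1, -2, 1, 0, 0, 0, 0, 0, 0, 1, 0, 0;
     0, 1, -2, 1, 0, 0, 0, 0, 0, 2, 2, 1;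
     0, 0, 1, -2, 1, 0, 0, 0, 0, 0, 0, 0;
     0, 0, 0, 1, -2, 1, 0, 0, 0, 0, 1, 0;
     0, 0, 0, 0, 1, -2, 1, 0, 0, 1, 2, 2;
     0, 0, 0, 0, 0, 1, -2, 1, 0, 0, 0, 0;
     0, 0, 0, 0, 0, 0, 1, -2, 1, 0, 0, 1;
     1, 0, 0, 0, 0, 0, 0, 1, -2, 2, 1, 2;
     0, 1, 2, 0, 0, 1, 0, 0, 2, -3, 0, 0;
     0, 0, 2, 0, 1, 2, 0, 0, 1, 0, -3, 0;
     0, 0, 1, 0, 0, 2, 0, 1, 2, 0, 0, -3]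

/-- The symmetric bilinear form on `V = ℚ¹²` with Gram matrix `gram12`. -/
noncomputable def bform12 : LinearMap.BilinForm ℚ (Fin 12 → ℚ) :=
  Matrix.toLinearMap₂' ℚ gram12

/-- The vector
`v = (1/7)(A₁ + 2A₂ + 3E₁) + (a/7)(B₁ + 2B₂ + 3E₂) + (b/7)(C₁ + 2C₂ + 3E₃)`. -/
noncomputable def vec12 (a b : ℤ) : Fin 12 → ℚ :=
  ((1 : ℚ) / 7) • (Pi.single 0 1 + 2 • Pi.single 1 1 + 3 • Pi.single 9 1)
    + ((a : ℚ) / 7) • (Pi.single 3 1 + 2 • Pi.single 4 1 + 3 • Pi.single 10 1)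
    + ((b : ℚ) / 7) • (Pi.single 6 1 + 2 • Pi.single 7 1 + 3 • Pi.single 11 1)

theorem Matrix.toLinearMap₂'_apply_single_one {R n m : Type*} [CommSemiring R] [Fintype n]
    [Fintype m] [DecidableEq n] [DecidableEq m] (M : Matrix n m R) (v : n → R) (j : m) :
    Matrix.toLinearMap₂' R M v (Pi.single j (1 : R)) = Matrix.vecMul v M j := by
  rw [Matrix.toLinearMap₂'_apply', Matrix.mulVec_single_one]
  rfl

theorem exists_int_eq_intCast_div_iff {n d : ℤ} (hd : d ≠ 0) :
    (∃ m : ℤ, (n / d : ℚ) = m) ↔ d ∣ n := by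
  constructor
  · rintro ⟨m, hm⟩
    refine ⟨m, ?_⟩
    rw [div_eq_iff (by exact_mod_cast hd)] at hm
    exact_mod_cast hm.trans (mul_comm _ _)
  · rintro ⟨m, rfl⟩
    exact ⟨m, by push_cast; field_simp⟩

def vec12Pairing (a b : ℤ) : Fin 12 → ℤ :=
  ![0, 0, 8 + 7 * a + 3 * b, 0, 0, 3 + 8 * a + 7 * b, 0, 0, 7 + 3 * a + 8 * b, -7, -7 * a, -7 * b]

theorem bform12_vec12_single (a b : ℤ) (j : Fin 12) :
    bform12 (vec12 a b) (Pi.single j 1) = (vec12Pairing a b j : ℚ) / 7 := by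
  rw [bform12, Matrix.toLinearMap₂'_apply_single_one]
  fin_cases j <;>
    simp [vec12, vec12Pairing, gram12, Matrix.vecMul, dotProduct, Fin.sum_univ_succ] <;> ring

theorem forall_seven_dvd_vec12Pairing_iff (a b : ℤ) :
    (∀ j, 7 ∣ vec12Pairing a b j) ↔ a ≡ 4 [ZMOD 7] ∧ b ≡ 2 [ZMOD 7] := by
  simp only [Int.ModEq]
  constructor
  · intro h
    have hA₃ : (7 : ℤ) ∣ 8 + 7 * a + 3 * b := h 2
    have hB₃ : (7 : ℤ) ∣ 3 + 8 * a + 7 * b := h 5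
    omega
  · intro hab j
    fin_cases j <;> simp only [vec12Pairing, Fin.reduceFinMk, Matrix.cons_val] <;> omega

/-- `B(v, x) ∈ ℤ` for all twelve basis vectors `x` if and only if
`a ≡ 4 (mod 7)` and `b ≡ 2 (mod 7)`. -/
theorem fake_plane_stmt12 (a b : ℤ) :
    (∀ x : Fin 12, ∃ m : ℤ, bform12 (vec12 a b) (Pi.single x 1) = m) ↔
      (a ≡ 4 [ZMOD 7] ∧ b ≡ 2 [ZMOD 7]) := by
  simp_rw [bform12_vec12_single]
  rw [← forall_seven_dvd_vec12Pairing_iff]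
  exact forall_congr' fun j => exists_int_eq_intCast_div_iff (d := 7) (by norm_num)
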